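/- arXiv:1709.00514 — 4 statements merged into one kernel-verified Lean document; each statement's English description precedes it below -/
import Mathlib

section
/- Let R be a commutative Noetherian ring and let J ⊆ I be ideals of R. Then the following are equivalent: (1) there exists an integer r ≥ 0 such that J·I^r = I^{r+1}; (2) every element x ∈ I is integrally dependent on J, i.e., x satisfies an equation x^n + a₁x^{n-1} + ⋯ + aₙ = 0 with aᵢ ∈ J^i for each i. -/
/-!
If `J * I ^ r = I ^ (r + 1)`, multiplication by `x ∈ I` maps the finitely generated module `I ^ r`
into `J • I ^ r`, so the Cayley–Hamilton trick gives a monic `p` whose coefficient `i` steps below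
the top lies in `J ^ i` and with `p(x) • I ^ r = 0`; then `p(x) * x ^ (r + 1) = 0` is an equation
of integral dependence. Conversely, such an equation gives `x ^ (n + 1) ∈ J * I ^ n`. If this
holds for the generators `g` of `I` with exponents `n g`, then by pigeonhole every monomial of
degree `∑ n g + 1` in the generators contains some `g ^ (n g + 1)`, so
`I ^ (∑ n g + 1) ≤ J * I ^ (∑ n g)`.
-/

open Polynomial Finset

section

variable {R : Type*} [CommRing R]

def IsIntegralOverIdeal (J : Ideal R) (x : R) : Prop :=
  ∃ n : ℕ, 0 < n ∧ ∃ a : ℕ → R,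
    (∀ i, 1 ≤ i → i ≤ n → a i ∈ J ^ i) ∧ x ^ n + ∑ i ∈ Icc 1 n, a i * x ^ (n - i) = 0

theorem Polynomial.Monic.eval_eq_pow_add_sum_Icc {p : R[X]} (hp : p.Monic) (x : R) :
    p.eval x = x ^ p.natDegree +
      ∑ i ∈ Icc 1 p.natDegree, p.coeff (p.natDegree - i) * x ^ (p.natDegree - i) := by
  set d := p.natDegree
  have hreindex : ∑ i ∈ Icc 1 d, p.coeff (d - i) * x ^ (d - i) =
      ∑ k ∈ range d, p.coeff k * x ^ k := by
    rw [← sum_range_reflect, ← Ico_add_one_right_eq_Icc, sum_Ico_eq_sum_range]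
    refine sum_congr rfl fun k _ => ?_
    rw [show d - (1 + k) = d - 1 - k by omega]
  rw [eval_eq_sum_range, sum_range_succ, hp.coeff_natDegree, hreindex, one_mul, add_comm]

theorem Polynomial.coeff_mul_X_pow_mem_pow {J : Ideal R} {p : R[X]} (hp : p.Monic)
    (hJ : ∀ k, p.coeff k ∈ J ^ (p.natDegree - k)) (m j : ℕ) :
    (p * X ^ m).coeff j ∈ J ^ ((p * X ^ m).natDegree - j) := by
  nontriviality R
  rw [coeff_mul_X_pow', natDegree_mul_X_pow m hp.ne_zero]
  split_ifs with hmj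
  · convert hJ (j - m) using 2
    omega
  · exact zero_mem _

theorem isIntegralOverIdeal_of_monic {J : Ideal R} {x : R} {p : R[X]} (hp : p.Monic)
    (hJ : ∀ k, p.coeff k ∈ J ^ (p.natDegree - k)) (hd : 0 < p.natDegree) (hx : p.eval x = 0) :
    IsIntegralOverIdeal J x := by
  refine ⟨p.natDegree, hd, fun i => p.coeff (p.natDegree - i), fun i _ hi => ?_, ?_⟩
  · simpa [Nat.sub_sub_self hi] using hJ (p.natDegree - i)
  · rw [← hp.eval_eq_pow_add_sum_Icc, hx]

theorem isIntegralOverIdeal_of_eval_mul_pow_eq_zero {J : Ideal R} {x : R} {p : R[X]}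
    (hp : p.Monic) (hJ : ∀ k, p.coeff k ∈ J ^ (p.natDegree - k)) {m : ℕ}
    (hx : p.eval x * x ^ m = 0) : IsIntegralOverIdeal J x := by
  cases subsingleton_or_nontrivial R
  · exact ⟨1, one_pos, 0, fun _ _ _ => zero_mem _, Subsingleton.elim _ _⟩
  -- the extra factor `X` makes the degree positive
  refine isIntegralOverIdeal_of_monic (hp.mul (monic_X_pow (m + 1)))
    (coeff_mul_X_pow_mem_pow hp hJ (m + 1)) ?_ ?_
  · rw [natDegree_mul_X_pow _ hp.ne_zero]
    omega
  · rw [eval_mul, eval_pow, eval_X, pow_succ, ← mul_assoc, hx, zero_mul]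

theorem exists_monic_coeff_mem_pow_eval_smul_eq_zero {M : Type*} [AddCommGroup M] [Module R M]
    [Module.Finite R M] (J : Ideal R) (x : R) (hx : ∀ m : M, x • m ∈ J • (⊤ : Submodule R M)) :
    ∃ p : R[X], p.Monic ∧ (∀ k, p.coeff k ∈ J ^ (p.natDegree - k)) ∧ ∀ m : M, p.eval x • m = 0 := by
  have hrange : LinearMap.range (algebraMap R (Module.End R M) x) ≤ J • ⊤ := by
    rintro _ ⟨m, rfl⟩
    exact hx m
  obtain ⟨p, hp, -, hJ, heval⟩ :=
    LinearMap.exists_monic_and_natDegree_eq_and_coeff_mem_pow_and_aeval_eq_zero R _ J hrange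
  refine ⟨p, hp, hJ, fun m => ?_⟩
  rw [aeval_algebraMap_apply, coe_aeval_eq_eval] at heval
  simpa using LinearMap.congr_fun heval m

theorem isIntegralOverIdeal_of_mul_pow_eq {I J : Ideal R} {r : ℕ} [Module.Finite R ↥(I ^ r)]
    (hr : J * I ^ r = I ^ (r + 1)) {x : R} (hx : x ∈ I) : IsIntegralOverIdeal J x := by
  have hxI : ∀ m : ↥(I ^ r), x • m ∈ J • (⊤ : Submodule R ↥(I ^ r)) := fun m => by
    rw [Submodule.mem_smul_top_iff, Ideal.smul_eq_mul, hr, pow_succ']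
    exact Ideal.mul_mem_mul hx m.2
  obtain ⟨p, hp, hJ, hpx⟩ := exists_monic_coeff_mem_pow_eval_smul_eq_zero J x hxI
  exact isIntegralOverIdeal_of_eval_mul_pow_eq_zero hp hJ
    (congrArg Subtype.val (hpx ⟨x ^ r, Ideal.pow_mem_pow hx r⟩))

theorem Ideal.pow_mul_pow_sub_le_mul_pow_pred {I J : Ideal R} (hJI : J ≤ I) {i n : ℕ}
    (hi : 1 ≤ i) (hin : i ≤ n) : J ^ i * I ^ (n - i) ≤ J * I ^ (n - 1) := by
  obtain ⟨k, rfl⟩ := Nat.exists_eq_add_of_le' hi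
  calc J ^ (k + 1) * I ^ (n - (k + 1)) = J * (J ^ k * I ^ (n - (k + 1))) := by ring
    _ ≤ J * (I ^ k * I ^ (n - (k + 1))) := by gcongr
    _ = J * I ^ (n - 1) := by rw [← pow_add, show k + (n - (k + 1)) = n - 1 by omega]

theorem IsIntegralOverIdeal.exists_pow_succ_mem {I J : Ideal R} (hJI : J ≤ I) {x : R} (hx : x ∈ I)
    (h : IsIntegralOverIdeal J x) : ∃ n : ℕ, x ^ (n + 1) ∈ J * I ^ n := by
  obtain ⟨n, hn, a, ha, heq⟩ := h
  refine ⟨n - 1, ?_⟩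
  rw [Nat.sub_add_cancel hn, eq_neg_of_add_eq_zero_left heq]
  refine neg_mem (Ideal.sum_mem _ fun i hi => ?_)
  obtain ⟨hi1, hin⟩ := mem_Icc.mp hi
  exact Ideal.pow_mul_pow_sub_le_mul_pow_pred hJI hi1 hin
    (Ideal.mul_mem_mul (ha i hi1 hin) (Ideal.pow_mem_pow hx _))

theorem Ideal.sup_pow_add_add_one_le {A B L : Ideal R} (hA : A ≤ L) (hB : B ≤ L) (a b : ℕ) :
    (A ⊔ B) ^ (a + b + 1) ≤ A ^ (a + 1) * L ^ b ⊔ B ^ (b + 1) * L ^ a := by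
  rw [← Ideal.add_eq_sup, add_pow, Ideal.sum_eq_sup]
  refine Finset.sup_le fun i hi => Ideal.mul_le_left.trans ?_
  have hi : i ≤ a + b + 1 := Nat.lt_succ_iff.mp (mem_range.mp hi)
  by_cases hai : a + 1 ≤ i
  · refine le_sup_of_le_left ?_
    calc A ^ i * B ^ (a + b + 1 - i)
        = A ^ (a + 1) * (A ^ (i - (a + 1)) * B ^ (a + b + 1 - i)) := by
          rw [← mul_assoc, ← pow_add, Nat.add_sub_cancel' hai]
      _ ≤ A ^ (a + 1) * (L ^ (i - (a + 1)) * L ^ (a + b + 1 - i)) := by gcongr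
      _ = A ^ (a + 1) * L ^ b := by rw [← pow_add]; congr 2; omega
  · refine le_sup_of_le_right ?_
    calc A ^ i * B ^ (a + b + 1 - i)
        = B ^ (b + 1) * (A ^ i * B ^ (a - i)) := by
          rw [show a + b + 1 - i = b + 1 + (a - i) by omega, pow_add]; ring
      _ ≤ B ^ (b + 1) * (L ^ i * L ^ (a - i)) := by gcongr
      _ = B ^ (b + 1) * L ^ a := by rw [← pow_add, Nat.add_sub_cancel' (by omega)]

theorem Ideal.span_pow_succ_le_mul_pow {I J : Ideal R} (s : Finset R) (hs : (s : Set R) ⊆ I)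
    (n : R → ℕ) (h : ∀ g ∈ s, g ^ (n g + 1) ∈ J * I ^ n g) :
    Ideal.span (s : Set R) ^ (∑ g ∈ s, n g + 1) ≤ J * I ^ ∑ g ∈ s, n g := by
  classical
  induction s using Finset.induction_on with
  | empty => simp
  | insert g s hg ih =>
    rw [coe_insert, Set.insert_subset_iff] at hs
    have hg_le : Ideal.span {g} ^ (n g + 1) ≤ J * I ^ n g := by
      rw [Ideal.span_singleton_pow, Ideal.span_singleton_le_iff_mem]
      exact h g (mem_insert_self g s)
    have hs_le := ih hs.2 fun g' hg' => h g' (mem_insert_of_mem hg')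
    rw [coe_insert, Ideal.span_insert, sum_insert hg]
    refine (Ideal.sup_pow_add_add_one_le ((Ideal.span_singleton_le_iff_mem _).mpr hs.1)
      (Ideal.span_le.mpr hs.2) _ _).trans (sup_le ?_ ?_)
    · calc Ideal.span {g} ^ (n g + 1) * I ^ ∑ g ∈ s, n g
          ≤ J * I ^ n g * I ^ ∑ g ∈ s, n g := by gcongr
        _ = J * I ^ (n g + ∑ g ∈ s, n g) := by rw [pow_add, mul_assoc]
    · calc Ideal.span (s : Set R) ^ (∑ g ∈ s, n g + 1) * I ^ n g
          ≤ J * I ^ (∑ g ∈ s, n g) * I ^ n g := by gcongr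
        _ = J * I ^ (n g + ∑ g ∈ s, n g) := by rw [mul_assoc, ← pow_add, add_comm]

theorem Ideal.exists_mul_pow_eq_pow_succ {I J : Ideal R} (hI : I.FG) (hJI : J ≤ I)
    (h : ∀ x ∈ I, ∃ n : ℕ, x ^ (n + 1) ∈ J * I ^ n) : ∃ r : ℕ, J * I ^ r = I ^ (r + 1) := by
  obtain ⟨s, rfl⟩ := hI
  choose! n hn using h
  refine ⟨∑ g ∈ s, n g, le_antisymm ?_ ?_⟩
  · rw [pow_succ']
    exact Ideal.mul_mono_left hJI
  · exact Ideal.span_pow_succ_le_mul_pow s Ideal.subset_span n fun g hg =>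
      hn g (Ideal.subset_span hg)

end

/-- For ideals `J ⊆ I` of a Noetherian commutative ring, `J` is a reduction of `I`
(`J·Iʳ = Iʳ⁺¹` for some `r`) if and only if every element of `I` is integrally
dependent on `J`. -/
theorem reduction_iff_integral
    (R : Type*) [CommRing R] [IsNoetherianRing R]
    (I J : Ideal R) (hJI : J ≤ I) :
    (∃ r : ℕ, J * I ^ r = I ^ (r + 1)) ↔
      (∀ x ∈ I, ∃ n : ℕ, 0 < n ∧ ∃ a : ℕ → R,
        (∀ i, 1 ≤ i → i ≤ n → a i ∈ J ^ i) ∧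
        x ^ n + ∑ i ∈ Finset.Icc 1 n, a i * x ^ (n - i) = 0) := by
  change _ ↔ ∀ x ∈ I, IsIntegralOverIdeal J x
  exact ⟨fun ⟨_, hr⟩ _ hx => isIntegralOverIdeal_of_mul_pow_eq hr hx,
    fun h => Ideal.exists_mul_pow_eq_pow_succ (IsNoetherian.noetherian I) hJI fun x hx =>
      (h x hx).exists_pow_succ_mem hJI hx⟩
end

section
/- Let R be a commutative ring, I an ideal of R, f ∈ R, and let L be the localization of R away from f with structure map φ : R → L. Then for every polynomial p ∈ L[X] belonging to the Rees algebra of the extended ideal I·L (i.e., whose i-th coefficient lies in (I·L)^i for all i), there exist an integer n ≥ 0 and a polynomial q ∈ R[X] belonging to the Rees algebra of I (i.e., whose i-th coefficient lies in I^i for all i) such that φ(f)^n · p is the image of q under the coefficientwise map R[X] → L[X] induced by φ. -/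
open Polynomial

/-- The Rees algebra commutes with localization away from an element: any element `p`
of the Rees algebra of `I·L ⊆ L = R[f⁻¹]`, after multiplying by a suitable power of
`f`, comes from an element of the Rees algebra of `I ⊆ R`. -/
theorem reesAlgebra_localization_away
    (R : Type*) [CommRing R] (I : Ideal R) (f : R)
    (L : Type*) [CommRing L] [Algebra R L] [IsLocalization.Away f L]
    (p : Polynomial L)
    (hp : ∀ i : ℕ, p.coeff i ∈ (I.map (algebraMap R L)) ^ i) :
    ∃ (n : ℕ) (q : Polynomial R),
      (∀ i : ℕ, q.coeff i ∈ I ^ i) ∧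
      Polynomial.C ((algebraMap R L) f) ^ n * p = q.map (algebraMap R L) := by
  have key : ∀ i : ℕ, ∃ (a : R) (m : ℕ), a ∈ I ^ i ∧
      p.coeff i * algebraMap R L (f ^ m) = algebraMap R L a := by
    intro i
    have h1 : p.coeff i ∈ Ideal.map (algebraMap R L) (I ^ i) := by
      rw [Ideal.map_pow]; exact hp i
    obtain ⟨⟨a, s⟩, hs⟩ :=
      (IsLocalization.mem_map_algebraMap_iff (Submonoid.powers f) L).mp h1
    obtain ⟨m, hm⟩ := s.2
    exact ⟨a, m, a.2, by simpa [← hm] using hs⟩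
  choose a m ha hm using key
  set D := p.natDegree + 1 with hD
  set n := (Finset.range D).sup m with hn
  refine ⟨n, ∑ i ∈ Finset.range D, Polynomial.C (f ^ (n - m i) * a i) * Polynomial.X ^ i,
    ?_, ?_⟩
  · intro i
    rw [Polynomial.finset_sum_coeff]
    simp only [Polynomial.coeff_C_mul, Polynomial.coeff_X_pow, mul_ite, mul_one, mul_zero]
    rw [Finset.sum_ite_eq (Finset.range D) i]
    split
    · exact Ideal.mul_mem_left _ _ (ha i)
    · exact (I ^ i).zero_mem
  · ext j
    rw [Polynomial.coeff_map, ← Polynomial.C_pow, Polynomial.coeff_C_mul,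
      Polynomial.finset_sum_coeff]
    simp only [Polynomial.coeff_C_mul, Polynomial.coeff_X_pow, mul_ite, mul_one, mul_zero]
    rw [Finset.sum_ite_eq (Finset.range D) j]
    split
    · rename_i hj
      have hmj : m j ≤ n := Finset.le_sup hj
      have : (algebraMap R L f) ^ n =
          (algebraMap R L f) ^ (n - m j) * (algebraMap R L f) ^ (m j) := by
        rw [← pow_add, Nat.sub_add_cancel hmj]
      have h2 := hm j
      rw [map_pow] at h2
      rw [this, map_mul, map_pow, mul_assoc, mul_comm ((algebraMap R L) f ^ m j), h2]
    · rename_i hj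
      have : p.coeff j = 0 := by
        apply Polynomial.coeff_eq_zero_of_natDegree_lt
        simpa [hD, Nat.lt_succ_iff] using hj
      simp [this]
end

section
/- Let p be a prime number, let A = (ℤ/pℤ)[x, y, z] be the polynomial ring in three variables over the field with p elements, and let R = A/((x^p, y^p) + (x, y, z)^{p+1}). Then the annihilator of the image of z in R is exactly the image in R of the ideal (x, y, z)^p; consequently the ideal of R generated by the image of z is isomorphic, as an R-module, to R/((x, y, z)^p·R). -/
/-!
Write `𝔪` for the ideal of the variables. The ideal `J = (xᵖ, yᵖ) + 𝔪ᵖ⁺¹` is a monomial ideal: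
every monomial occurring in an element of `J` is divisible by `xᵖ` or by `yᵖ`, or has degree at
least `p + 1`. If `m z ∈ J` for a monomial `m`, then either `xᵖ` or `yᵖ` divides `m` (as `z` is
neither), or `deg m + 1 ≥ p + 1`; either way `m ∈ 𝔪ᵖ`. Conversely `𝔪ᵖ z ⊆ 𝔪ᵖ⁺¹ ⊆ J`. So the colon
ideal `J : z`, whose image in `R = A ⧸ J` is the annihilator of `z`, equals `𝔪ᵖ`, and
`R z ≅ R ⧸ ann z`.
-/

open MvPolynomial

namespace MvPolynomial

variable {σ R : Type*} [CommSemiring R]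

theorem support_subset_of_mem_span_X_pow_sup_pow_idealOfVars {s : Set σ} {n : ℕ}
    {g : MvPolynomial σ R}
    (hg : g ∈ Ideal.span ((X · ^ n) '' s) ⊔ idealOfVars σ R ^ (n + 1)) :
    ∀ d ∈ g.support, (∃ j ∈ s, n ≤ d j) ∨ n + 1 ≤ d.degree := by
  have hup : IsUpperSet {d : σ →₀ ℕ | (∃ j ∈ s, n ≤ d j) ∨ n + 1 ≤ d.degree} := by
    rintro d e hde (⟨j, hj, hn⟩ | hn)
    · exact Or.inl ⟨j, hj, hn.trans (hde j)⟩
    · exact Or.inr (hn.trans (Finsupp.degree_mono hde))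
  suffices h : Ideal.span ((X · ^ n) '' s) ⊔ idealOfVars σ R ^ (n + 1) ≤
      restrictSupportIdeal _ _ hup from fun d hd => h hg hd
  refine sup_le (Ideal.span_le.mpr ?_) fun f hf d hd => ?_
  · rintro _ ⟨j, hj, rfl⟩
    dsimp only
    rw [SetLike.mem_coe, X_pow_eq_monomial]
    intro d hd
    obtain rfl := Finset.mem_singleton.mp (support_monomial_subset hd)
    exact Or.inl ⟨j, hj, by simp⟩
  · exact Or.inr ((mem_pow_idealOfVars_iff _ f).mp hf d hd)

theorem mul_X_mem_span_X_pow_sup_pow_idealOfVars_iff {s : Set σ} {n : ℕ} {i : σ} (hi : i ∉ s)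
    {f : MvPolynomial σ R} :
    f * X i ∈ Ideal.span ((X · ^ n) '' s) ⊔ idealOfVars σ R ^ (n + 1) ↔
      f ∈ idealOfVars σ R ^ n := by
  refine ⟨fun hf => (mem_pow_idealOfVars_iff n f).mpr fun d hd => ?_, fun hf => ?_⟩
  · have hdi : d + Finsupp.single i 1 ∈ (f * X i).support := by
      rwa [mem_support_iff, coeff_mul_X, ← mem_support_iff]
    rcases support_subset_of_mem_span_X_pow_sup_pow_idealOfVars hf _ hdi with ⟨j, hj, hn⟩ | hn
    · have hji : j ≠ i := fun h => hi (h ▸ hj)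
      rw [Finsupp.add_apply, Finsupp.single_eq_of_ne hji, add_zero] at hn
      exact hn.trans (Finsupp.le_degree j d)
    · simpa using hn
  · rw [pow_succ]
    exact Ideal.mem_sup_right (Ideal.mul_mem_mul hf (Ideal.subset_span ⟨i, rfl⟩))

end MvPolynomial

theorem Ideal.torsionOf_mk_eq_map {A : Type*} [CommRing A] {I J : Ideal A} {a : A}
    (h : ∀ f, f * a ∈ J ↔ f ∈ I) :
    Ideal.torsionOf (A ⧸ J) (A ⧸ J) (Ideal.Quotient.mk J a) = I.map (Ideal.Quotient.mk J) := by
  have hJI : J ≤ I := fun f hf => (h f).mp (J.mul_mem_right a hf)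
  ext u
  obtain ⟨f, rfl⟩ := Ideal.Quotient.mk_surjective u
  rw [Ideal.mem_torsionOf_iff, smul_eq_mul, ← map_mul, Ideal.Quotient.eq_zero_iff_mem, h,
    Ideal.mem_quotient_iff_mem hJI]

theorem annihilator_of_z_in_EHU_example_general
    (p : ℕ)
    (x y z : MvPolynomial (Fin 3) (ZMod p))
    (hx : x = X 0) (hy : y = X 1) (hz : z = X 2)
    (J : Ideal (MvPolynomial (Fin 3) (ZMod p)))
    (hJ : J = Ideal.span {x ^ p, y ^ p} + (Ideal.span {x, y, z}) ^ (p + 1))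
    (π : MvPolynomial (Fin 3) (ZMod p) →+* MvPolynomial (Fin 3) (ZMod p) ⧸ J)
    (hπ : π = Ideal.Quotient.mk J) :
    (∀ u : MvPolynomial (Fin 3) (ZMod p) ⧸ J,
        u * π z = 0 ↔ u ∈ Ideal.map π ((Ideal.span {x, y, z}) ^ p)) ∧
    Nonempty
      ((Ideal.span {π z} : Ideal (MvPolynomial (Fin 3) (ZMod p) ⧸ J)) ≃ₗ[MvPolynomial (Fin 3) (ZMod p) ⧸ J]
        (MvPolynomial (Fin 3) (ZMod p) ⧸ J) ⧸ Ideal.map π ((Ideal.span {x, y, z}) ^ p)) := by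
  subst hx hy hz hJ hπ
  have hvars : idealOfVars (Fin 3) (ZMod p) = Ideal.span {X 0, X 1, X 2} := by
    rw [idealOfVars]
    congr 1
    ext f
    simp [Fin.exists_fin_succ, eq_comm]
  have hann := Ideal.torsionOf_mk_eq_map fun f =>
    mul_X_mem_span_X_pow_sup_pow_idealOfVars_iff (R := ZMod p) (s := {0, 1}) (n := p) (f := f)
      (show (2 : Fin 3) ∉ {0, 1} by decide)
  rw [Set.image_pair, hvars, ← Submodule.add_eq_sup] at hann
  exact ⟨fun u => (Ideal.mem_torsionOf_iff _ u).symm.trans (SetLike.ext_iff.mp hann u),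
    ⟨(Ideal.quotTorsionOfEquivSpanSingleton _ _ _).symm.trans (Submodule.quotEquivOfEq _ _ hann)⟩⟩

/-- In `R = (ℤ/p)[x,y,z]/((xᵖ, yᵖ) + (x,y,z)^(p+1))`, the annihilator of the image of
`z` is exactly the image of `(x,y,z)ᵖ`; consequently the ideal of `R` generated by the
image of `z` is isomorphic as an `R`-module to `R/((x,y,z)ᵖ·R)`. -/
theorem annihilator_of_z_in_EHU_example
    (p : ℕ) (hp : p.Prime)
    (x y z : MvPolynomial (Fin 3) (ZMod p))
    (hx : x = X 0) (hy : y = X 1) (hz : z = X 2)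
    (J : Ideal (MvPolynomial (Fin 3) (ZMod p)))
    (hJ : J = Ideal.span {x ^ p, y ^ p} + (Ideal.span {x, y, z}) ^ (p + 1))
    (π : MvPolynomial (Fin 3) (ZMod p) →+* MvPolynomial (Fin 3) (ZMod p) ⧸ J)
    (hπ : π = Ideal.Quotient.mk J) :
    (∀ u : MvPolynomial (Fin 3) (ZMod p) ⧸ J,
        u * π z = 0 ↔ u ∈ Ideal.map π ((Ideal.span {x, y, z}) ^ p)) ∧
    Nonempty
      ((Ideal.span {π z} : Ideal (MvPolynomial (Fin 3) (ZMod p) ⧸ J)) ≃ₗ[MvPolynomial (Fin 3) (ZMod p) ⧸ J]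
        (MvPolynomial (Fin 3) (ZMod p) ⧸ J) ⧸ Ideal.map π ((Ideal.span {x, y, z}) ^ p)) :=
  annihilator_of_z_in_EHU_example_general p x y z hx hy hz J hJ π hπ
end

section
/- Let k be a field of characteristic different from 2, and let S = k[x, y, w₀, w₁] be the polynomial ring in four variables. Let T = (x² − y⁴) + (y²·w₀ − x·w₁) ⊆ S and let E = (x, y²) ⊆ S. Then the minimal primes over the saturation T : E^∞ = {s ∈ S : s·E^n ⊆ T for some n} are exactly the two prime ideals (x + y², w₀ + w₁) and (x − y², w₀ − w₁). -/
open MvPolynomial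

section Aux

variable {k : Type*} [Field k]

/-- Substitution map sending `X 0 ↦ C ε * X 1 ^ 2`, `X 2 ↦ C ε * X 3`. -/
noncomputable def tacPhi (ε : k) : MvPolynomial (Fin 4) k →ₐ[k] MvPolynomial (Fin 4) k :=
  aeval ![C ε * X 1 ^ 2, X 1, C ε * X 3, X 3]

lemma tacPhi_X0 (ε : k) : tacPhi ε (X 0) = C ε * X 1 ^ 2 := by
  simp [tacPhi]
lemma tacPhi_X1 (ε : k) : tacPhi ε (X 1) = X 1 := by simp [tacPhi]
lemma tacPhi_X2 (ε : k) : tacPhi ε (X 2) = C ε * X 3 := by simp [tacPhi]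
lemma tacPhi_X3 (ε : k) : tacPhi ε (X 3) = X 3 := by simp [tacPhi]

lemma sub_tacPhi_mem (ε : k) (p : MvPolynomial (Fin 4) k) :
    p - tacPhi ε p ∈ Ideal.span {X 0 - C ε * X 1 ^ 2, X 2 - C ε * X 3} := by
  induction p using MvPolynomial.induction_on with
  | C a => simp [tacPhi]
  | add p q hp hq =>
      have : p + q - tacPhi ε (p + q) = (p - tacPhi ε p) + (q - tacPhi ε q) := by
        rw [map_add]; ring
      rw [this]; exact Ideal.add_mem _ hp hq
  | mul_X p n hp =>
      have h1 : p * X n - tacPhi ε (p * X n)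
          = (p - tacPhi ε p) * X n + tacPhi ε p * (X n - tacPhi ε (X n)) := by
        rw [map_mul]; ring
      rw [h1]
      refine Ideal.add_mem _ (Ideal.mul_mem_right _ _ hp) (Ideal.mul_mem_left _ _ ?_)
      fin_cases n
      · exact (by simp [tacPhi] : X (0 : Fin 4) - tacPhi ε (X 0) = X 0 - C ε * X 1 ^ 2) ▸
          Ideal.subset_span (Set.mem_insert _ _)
      · exact (by simp [tacPhi] : X (1 : Fin 4) - tacPhi ε (X 1) = 0) ▸ Ideal.zero_mem _
      · exact (by simp [tacPhi] : X (2 : Fin 4) - tacPhi ε (X 2) = X 2 - C ε * X 3) ▸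
          Ideal.subset_span (Set.mem_insert_of_mem _ rfl)
      · exact (by simp [tacPhi] : X (3 : Fin 4) - tacPhi ε (X 3) = 0) ▸ Ideal.zero_mem _

lemma tacKer (ε : k) :
    Ideal.span {X 0 - C ε * X 1 ^ 2, X 2 - C ε * X 3}
      = RingHom.ker (tacPhi ε : MvPolynomial (Fin 4) k →ₐ[k] _) := by
  apply le_antisymm
  · rw [Ideal.span_le]
    rintro z (rfl | rfl)
    · simp [RingHom.mem_ker, map_sub, tacPhi]
    · simp [RingHom.mem_ker, map_sub, tacPhi]
  · intro p hp
    have h0 : tacPhi ε p = 0 := hp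
    have := sub_tacPhi_mem ε p
    rwa [h0, sub_zero] at this

lemma tacPrime (ε : k) :
    (Ideal.span {X 0 - C ε * X 1 ^ 2, X 2 - C ε * X 3} :
      Ideal (MvPolynomial (Fin 4) k)).IsPrime := by
  rw [tacKer]
  exact RingHom.ker_isPrime _

end Aux

section Aux2
variable {k : Type*} [Field k]

lemma tac_notMem_X0 (ε : k) (hε : ε ≠ 0) :
    (X 0 : MvPolynomial (Fin 4) k) ∉
      Ideal.span {X 0 - C ε * X 1 ^ 2, X 2 - C ε * X 3} := by
  rw [tacKer]
  intro h
  have h0 : tacPhi ε (X 0 : MvPolynomial (Fin 4) k) = 0 := h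
  rw [tacPhi_X0] at h0
  exact (mul_ne_zero (C_ne_zero.mpr hε) (pow_ne_zero _ (X_ne_zero 1))) h0

lemma tac_notMem₂ (ε η : k) (h : ε ≠ η) :
    (X 0 - C η * X 1 ^ 2 : MvPolynomial (Fin 4) k) ∉
      Ideal.span {X 0 - C ε * X 1 ^ 2, X 2 - C ε * X 3} := by
  rw [tacKer]
  intro hk
  have h0 : tacPhi ε (X 0 - C η * X 1 ^ 2 : MvPolynomial (Fin 4) k) = 0 := hk
  rw [map_sub, map_mul, map_pow, tacPhi_X0, tacPhi_X1] at h0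
  have hC : tacPhi ε (C η : MvPolynomial (Fin 4) k) = C η := by simp [tacPhi]
  rw [hC] at h0
  have : (C (ε - η) : MvPolynomial (Fin 4) k) * X 1 ^ 2 = 0 := by
    rw [map_sub]; ring_nf; ring_nf at h0; linear_combination h0
  exact (mul_ne_zero (C_ne_zero.mpr (sub_ne_zero.mpr h)) (pow_ne_zero _ (X_ne_zero 1))) this

end Aux2

/-- Blowing up `(x, y²)` desingularizes the tacnode `x² − y⁴` in a single step:
in `S = k[x,y,w₀,w₁]` (char k ≠ 2), with `T = (x² − y⁴, y²w₀ − xw₁)` the total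
transform and `E = (x, y²)` the exceptional ideal, the minimal primes over the
saturation `T : E^∞` are exactly `(x + y², w₀ + w₁)` and `(x − y², w₀ − w₁)`. -/
theorem tacnode_strict_transform_minimal_primes
    (k : Type*) [Field k] (hchar : (2 : k) ≠ 0)
    (x y w₀ w₁ : MvPolynomial (Fin 4) k)
    (hx : x = X 0) (hy : y = X 1) (hw₀ : w₀ = X 2) (hw₁ : w₁ = X 3)
    (T E Sat : Ideal (MvPolynomial (Fin 4) k))
    (hT : T = Ideal.span {x ^ 2 - y ^ 4, y ^ 2 * w₀ - x * w₁})
    (hE : E = Ideal.span {x, y ^ 2})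
    (hSat : ∀ s, s ∈ Sat ↔ ∃ n : ℕ, ∀ e ∈ E ^ n, s * e ∈ T) :
    Sat.minimalPrimes =
      {Ideal.span {x + y ^ 2, w₀ + w₁}, Ideal.span {x - y ^ 2, w₀ - w₁}} := by
  subst hx hy hw₀ hw₁ hT hE
  have g1p : (X 0 : MvPolynomial (Fin 4) k) - C (-1 : k) * X 1 ^ 2 = X 0 + X 1 ^ 2 := by
    simp
  have g2p : (X 2 : MvPolynomial (Fin 4) k) - C (-1 : k) * X 3 = X 2 + X 3 := by simp
  have g1m : (X 0 : MvPolynomial (Fin 4) k) - C (1 : k) * X 1 ^ 2 = X 0 - X 1 ^ 2 := by simp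
  have g2m : (X 2 : MvPolynomial (Fin 4) k) - C (1 : k) * X 3 = X 2 - X 3 := by simp
  set Pp : Ideal (MvPolynomial (Fin 4) k) := Ideal.span {X 0 + X 1 ^ 2, X 2 + X 3} with hPpdef
  set Pm : Ideal (MvPolynomial (Fin 4) k) := Ideal.span {X 0 - X 1 ^ 2, X 2 - X 3} with hPmdef
  have hPp : Pp = Ideal.span {X 0 - C (-1 : k) * X 1 ^ 2, X 2 - C (-1 : k) * X 3} := by
    rw [g1p, g2p]
  have hPm : Pm = Ideal.span {X 0 - C (1 : k) * X 1 ^ 2, X 2 - C (1 : k) * X 3} := by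
    rw [g1m, g2m]
  have primp : Pp.IsPrime := by rw [hPp, tacKer]; exact RingHom.ker_isPrime _
  have primm : Pm.IsPrime := by rw [hPm, tacKer]; exact RingHom.ker_isPrime _
  have hx_nm_p : (X 0 : MvPolynomial (Fin 4) k) ∉ Pp := by
    rw [hPp]; exact tac_notMem_X0 _ (neg_ne_zero.mpr one_ne_zero)
  have hx_nm_m : (X 0 : MvPolynomial (Fin 4) k) ∉ Pm := by
    rw [hPm]; exact tac_notMem_X0 _ one_ne_zero
  have hne1 : (-1 : k) ≠ 1 := by
    intro h
    apply hchar
    linear_combination -h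
  have hb_nm_p : (X 0 - X 1 ^ 2 : MvPolynomial (Fin 4) k) ∉ Pp := by
    rw [hPp, ← g1m]; exact tac_notMem₂ _ _ hne1
  have ha_nm_m : (X 0 + X 1 ^ 2 : MvPolynomial (Fin 4) k) ∉ Pm := by
    rw [hPm, ← g1p]; exact tac_notMem₂ _ _ hne1.symm
  have hTPp : Ideal.span {(X 0 : MvPolynomial (Fin 4) k) ^ 2 - X 1 ^ 4,
      X 1 ^ 2 * X 2 - X 0 * X 3} ≤ Pp := by
    rw [Ideal.span_le]
    rintro z (rfl | rfl)
    · exact Ideal.mem_span_pair.mpr ⟨X 0 - X 1 ^ 2, 0, by ring⟩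
    · exact Ideal.mem_span_pair.mpr ⟨X 2, -(X 0), by ring⟩
  have hTPm : Ideal.span {(X 0 : MvPolynomial (Fin 4) k) ^ 2 - X 1 ^ 4,
      X 1 ^ 2 * X 2 - X 0 * X 3} ≤ Pm := by
    rw [Ideal.span_le]
    rintro z (rfl | rfl)
    · exact Ideal.mem_span_pair.mpr ⟨X 0 + X 1 ^ 2, 0, by ring⟩
    · exact Ideal.mem_span_pair.mpr ⟨-(X 2), X 0, by ring⟩
  have hxE : (X 0 : MvPolynomial (Fin 4) k) ∈ Ideal.span {X 0, X 1 ^ 2} :=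
    Ideal.subset_span (Set.mem_insert _ _)
  have hSatPp : Sat ≤ Pp := by
    intro s hs
    obtain ⟨n, hn⟩ := (hSat s).1 hs
    have hm := hTPp (hn _ (Ideal.pow_mem_pow hxE n))
    rcases primp.mem_or_mem hm with h | h
    · exact h
    · exact absurd (primp.mem_of_pow_mem n h) hx_nm_p
  have hSatPm : Sat ≤ Pm := by
    intro s hs
    obtain ⟨n, hn⟩ := (hSat s).1 hs
    have hm := hTPm (hn _ (Ideal.pow_mem_pow hxE n))
    rcases primm.mem_or_mem hm with h | h
    · exact h
    · exact absurd (primm.mem_of_pow_mem n h) hx_nm_m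
  have hkey : Pp * Pm * (Ideal.span {(X 0 : MvPolynomial (Fin 4) k), X 1 ^ 2}) ^ 2 ≤
      Ideal.span {(X 0 : MvPolynomial (Fin 4) k) ^ 2 - X 1 ^ 4, X 1 ^ 2 * X 2 - X 0 * X 3} := by
    rw [pow_two, hPpdef, hPmdef, Ideal.span_mul_span', Ideal.span_mul_span',
      Ideal.span_mul_span', Ideal.span_le]
    rintro z hz
    obtain ⟨pq, hpq, uv, huv, rfl⟩ := Set.mem_mul.1 hz
    obtain ⟨p, hp, q, hq, rfl⟩ := Set.mem_mul.1 hpq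
    obtain ⟨u, hu, v, hv, rfl⟩ := Set.mem_mul.1 huv
    simp only [Set.mem_insert_iff, Set.mem_singleton_iff] at hp hq hu hv
    rcases hp with rfl | rfl <;> rcases hq with rfl | rfl <;>
      rcases hu with rfl | rfl <;> rcases hv with rfl | rfl
    · exact Ideal.mem_span_pair.mpr ⟨X 0 ^ 2, 0, by ring⟩
    · exact Ideal.mem_span_pair.mpr ⟨X 0 * X 1 ^ 2, 0, by ring⟩
    · exact Ideal.mem_span_pair.mpr ⟨X 0 * X 1 ^ 2, 0, by ring⟩
    · exact Ideal.mem_span_pair.mpr ⟨X 1 ^ 4, 0, by ring⟩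
    · exact Ideal.mem_span_pair.mpr ⟨X 0 * X 2, X 0 ^ 2 + X 0 * X 1 ^ 2, by ring⟩
    · exact Ideal.mem_span_pair.mpr ⟨X 0 * X 3, X 0 ^ 2 + X 0 * X 1 ^ 2, by ring⟩
    · exact Ideal.mem_span_pair.mpr ⟨X 0 * X 3, X 0 ^ 2 + X 0 * X 1 ^ 2, by ring⟩
    · exact Ideal.mem_span_pair.mpr ⟨X 1 ^ 2 * X 3, X 0 * X 1 ^ 2 + X 1 ^ 4, by ring⟩
    · exact Ideal.mem_span_pair.mpr ⟨X 0 * X 2, X 0 * X 1 ^ 2 - X 0 ^ 2, by ring⟩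
    · exact Ideal.mem_span_pair.mpr ⟨X 0 * X 3, X 0 ^ 2 - X 0 * X 1 ^ 2, by ring⟩
    · exact Ideal.mem_span_pair.mpr ⟨X 0 * X 3, X 0 ^ 2 - X 0 * X 1 ^ 2, by ring⟩
    · exact Ideal.mem_span_pair.mpr ⟨X 1 ^ 2 * X 3, X 0 * X 1 ^ 2 - X 1 ^ 4, by ring⟩
    · exact Ideal.mem_span_pair.mpr ⟨X 2 ^ 2, X 1 ^ 2 * X 2 + X 0 * X 3, by ring⟩
    · exact Ideal.mem_span_pair.mpr ⟨X 2 * X 3, X 0 * X 2 + X 1 ^ 2 * X 3, by ring⟩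
    · exact Ideal.mem_span_pair.mpr ⟨X 2 * X 3, X 0 * X 2 + X 1 ^ 2 * X 3, by ring⟩
    · exact Ideal.mem_span_pair.mpr ⟨X 3 ^ 2, X 1 ^ 2 * X 2 + X 0 * X 3, by ring⟩
  have hPPSat : Pp * Pm ≤ Sat := by
    intro s hs
    rw [hSat s]
    exact ⟨2, fun e he => hkey (Ideal.mul_mem_mul hs he)⟩
  have hbPm : (X 0 - X 1 ^ 2 : MvPolynomial (Fin 4) k) ∈ Pm :=
    Ideal.subset_span (Set.mem_insert _ _)
  have haPp : (X 0 + X 1 ^ 2 : MvPolynomial (Fin 4) k) ∈ Pp :=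
    Ideal.subset_span (Set.mem_insert _ _)
  have hnotmp : ¬ Pm ≤ Pp := fun h => hb_nm_p (h hbPm)
  have hnotpm : ¬ Pp ≤ Pm := fun h => ha_nm_m (h haPp)
  ext q
  simp only [Set.mem_insert_iff, Set.mem_singleton_iff]
  constructor
  · intro hqm
    have hq : q.IsPrime := hqm.1.1
    have hSq : Sat ≤ q := hqm.1.2
    rcases hq.mul_le.1 (hPPSat.trans hSq) with h | h
    · exact Or.inl (le_antisymm (hqm.2 ⟨primp, hSatPp⟩ h) h)
    · exact Or.inr (le_antisymm (hqm.2 ⟨primm, hSatPm⟩ h) h)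
  · rintro (rfl | rfl)
    · refine ⟨⟨primp, hSatPp⟩, ?_⟩
      rintro r ⟨hr, hSr⟩ hrle
      rcases hr.mul_le.1 (hPPSat.trans hSr) with h | h
      · exact h
      · exact absurd (h.trans hrle) hnotmp
    · refine ⟨⟨primm, hSatPm⟩, ?_⟩
      rintro r ⟨hr, hSr⟩ hrle
      rcases hr.mul_le.1 (hPPSat.trans hSr) with h | h
      · exact absurd (h.trans hrle) hnotpm
      · exact h
end
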